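/- Suppose (u^{n−1}, φ^{n−1}) and (u^n, φ^n) both satisfy the discrete Poisson equation; that u^{n−1}_i(K) ≥ 0 for 1 ≤ i ≤ I and Σ_{i=1}^I u^{n−1}_i(K) ≤ 1 for all K; that u^n_i(K) > 0 for all 1 ≤ i ≤ I and u^n_0(K) := 1 − Σ_{i=1}^I u^n_i(K) > 0 for all K; and that for every 1 ≤ i ≤ I and K ∈ 𝒯 the conservation law m_K·(u^n_i(K) − u^{n−1}_i(K)) + τ·Σ_{L} F^n_i(K,L) = 0 holds, where F^n_i is the discrete flux associated with u^n and φ^n. Define the electrochemical potentials μ_i(K) = log(u^n_i(K)/u^n_0(K)) + z_i·φ^n(K) and the dissipation 𝒟 = (1/2)·Σ_{i=1}^I Σ_{K,L} F^n_i(K,L)·(μ_i(K) − μ_i(L)). Then 𝒟 ≥ 0 and ℋ(u^n, φ^n) + τ·𝒟 ≤ ℋ(u^{n−1}, φ^{n−1}). -/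

import Mathlib

/-- The Bernoulli function: `𝔅(y) = y / (exp y - 1)` for `y ≠ 0`, and `𝔅(0) = 1`. -/
noncomputable def Bern (y : ℝ) : ℝ := if y = 0 then 1 else y / (Real.exp y - 1)

/-- The mixing entropy `H(U) = u₀·log u₀ + Σᵢ uᵢ·log uᵢ` with `u₀ = 1 − Σᵢ uᵢ`
(the convention `0·log 0 = 0` holds since `Real.log 0 = 0` in Mathlib). -/
noncomputable def mixEntropy (I : ℕ) (U : Fin I → ℝ) : ℝ :=
  (1 - ∑ i, U i) * Real.log (1 - ∑ i, U i) + ∑ i, U i * Real.log (U i)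

/-!
The free energy is convex, so its decrease over a step is at least its first variation in the
direction `uⁿ - uⁿ⁻¹`. For the mixing entropy this is the tangent-line inequality for `x log x`.
Up to a constant the electric part is the positive semidefinite quadratic form
`(λ²/2) (½ Σ_{K,L} a(K,L) (φ_K - φ_L)² + Σ_K b_K φ_K²)`, whose gradient the Poisson equation
identifies with the charge density. Together, `ℋⁿ - ℋⁿ⁻¹ ≤ Σ_K m_K Σ_i μ_i(K) (uⁿ_i(K) - uⁿ⁻¹_i(K))`,
and the conservation law plus summation by parts turn the right-hand side into `-τ 𝒟`.
Each edge contributes nonnegatively to `𝒟`, because the Scharfetter–Gummel flux is a positive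
multiple of `exp (μ_i(K) - μ_i(L)) - 1`.
-/
open Real Finset

lemma Bern_pos (y : ℝ) : 0 < Bern y := by
  rw [Bern]
  split_ifs with hy
  · exact one_pos
  · rcases lt_or_gt_of_ne hy with hy | hy
    · exact div_pos_of_neg_of_neg hy (sub_neg.2 (exp_lt_one_iff.2 hy))
    · exact div_pos hy (sub_pos.2 (one_lt_exp_iff.2 hy))

lemma Bern_neg (y : ℝ) : Bern (-y) = exp y * Bern y := by
  rcases eq_or_ne y 0 with rfl | hy
  · simp [Bern]
  · have hexp : exp y ≠ 1 := by simpa using hy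
    have h₁ : exp y - 1 ≠ 0 := sub_ne_zero.2 hexp
    have h₂ : 1 - exp y ≠ 0 := sub_ne_zero.2 hexp.symm
    rw [Bern, Bern, if_neg (neg_ne_zero.2 hy), if_neg hy, exp_neg]
    field_simp
    ring

lemma exp_sub_one_mul_nonneg (d : ℝ) : 0 ≤ (exp d - 1) * d := by
  simpa using (exp_monotone.monovary monotone_id).sub_mul_sub_nonneg 0 d

-- `p, q` are the species and solvent fractions in `K`, `p', q'` those in `L`.
lemma Bern_flux_eq {p q p' q' : ℝ} (hp : 0 < p) (hq : 0 < q) (hp' : 0 < p') (hq' : 0 < q')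
    (z φ φ' : ℝ) :
    p * q' * Bern (z * (φ' - φ)) - p' * q * Bern (z * (φ - φ')) =
      Bern (z * (φ - φ')) * (p' * q) *
        (exp ((log (p / q) + z * φ) - (log (p' / q') + z * φ')) - 1) := by
  have hexp : exp ((log (p / q) + z * φ) - (log (p' / q') + z * φ')) =
      p / q / (p' / q') * exp (z * (φ - φ')) := by
    rw [show (log (p / q) + z * φ) - (log (p' / q') + z * φ') =
        log (p / q) - log (p' / q') + z * (φ - φ') by ring,
      exp_add, exp_sub, exp_log (by positivity), exp_log (by positivity)]
  rw [hexp, show z * (φ' - φ) = -(z * (φ - φ')) by ring, Bern_neg]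
  field_simp

lemma Bern_flux_mul_sub_nonneg {p q p' q' : ℝ} (hp : 0 < p) (hq : 0 < q) (hp' : 0 < p')
    (hq' : 0 < q') (z φ φ' : ℝ) :
    0 ≤ (p * q' * Bern (z * (φ' - φ)) - p' * q * Bern (z * (φ - φ'))) *
      ((log (p / q) + z * φ) - (log (p' / q') + z * φ')) := by
  rw [Bern_flux_eq hp hq hp' hq', mul_assoc]
  exact mul_nonneg (mul_nonneg (Bern_pos _).le (by positivity)) (exp_sub_one_mul_nonneg _)

lemma mul_log_sub_mul_log_le {x y : ℝ} (hx : 0 < x) (hy : 0 ≤ y) :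
    x * log x - y * log y ≤ (1 + log x) * (x - y) := by
  rcases hy.eq_or_lt with rfl | hy
  · rw [zero_mul, sub_zero, sub_zero, add_mul, one_mul, mul_comm]
    linarith
  · have h := mul_le_mul_of_nonneg_left (log_le_sub_one_of_pos (div_pos hx hy)) hy.le
    rw [log_div hx.ne' hy.ne', mul_sub_one, mul_div_cancel₀ _ hy.ne'] at h
    linarith

lemma mixEntropy_sub_le {I : ℕ} {x y : Fin I → ℝ} (hx : ∀ i, 0 < x i)
    (hx₀ : 0 < 1 - ∑ i, x i) (hy : ∀ i, 0 ≤ y i) (hy₀ : ∑ i, y i ≤ 1) :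
    mixEntropy I x - mixEntropy I y ≤ ∑ i, log (x i / (1 - ∑ j, x j)) * (x i - y i) := by
  have h₀ := mul_log_sub_mul_log_le hx₀ (sub_nonneg.2 hy₀)
  have hs := sum_le_sum fun i (_ : i ∈ univ) => mul_log_sub_mul_log_le (hx i) (hy i)
  have hsplit : ∑ i, log (x i / (1 - ∑ j, x j)) * (x i - y i) =
      ∑ i, (1 + log (x i)) * (x i - y i) +
        (1 + log (1 - ∑ j, x j)) * ((1 - ∑ i, x i) - (1 - ∑ i, y i)) := by
    rw [show (1 - ∑ i, x i) - (1 - ∑ i, y i) = -∑ i, (x i - y i) by rw [sum_sub_distrib]; ring,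
      mul_neg, ← sub_eq_add_neg, mul_sum, ← sum_sub_distrib]
    refine sum_congr rfl fun i _ => ?_
    rw [log_div (hx i).ne' hx₀.ne']
    ring
  rw [hsplit, mixEntropy, mixEntropy]
  rw [sum_sub_distrib] at hs
  linarith

lemma sum_mul_mixEntropy_sub_le {T : Type*} [Fintype T] {I : ℕ} {m : T → ℝ} (hm : ∀ K, 0 ≤ m K)
    {x y : Fin I → T → ℝ} (hx : ∀ i K, 0 < x i K) (hx₀ : ∀ K, 0 < 1 - ∑ i, x i K)
    (hy : ∀ i K, 0 ≤ y i K) (hy₀ : ∀ K, ∑ i, y i K ≤ 1) :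
    ∑ K, m K * mixEntropy I (fun i => x i K) - ∑ K, m K * mixEntropy I (fun i => y i K) ≤
      ∑ K, m K * ∑ i, log (x i K / (1 - ∑ j, x j K)) * (x i K - y i K) := by
  rw [← sum_sub_distrib]
  refine sum_le_sum fun K _ => ?_
  rw [← mul_sub]
  exact mul_le_mul_of_nonneg_left (mixEntropy_sub_le (hx · K) (hx₀ K) (hy · K) (hy₀ K)) (hm K)

lemma sum_mul_sum_of_antisymm {T : Type*} [Fintype T] {G : T → T → ℝ}
    (hG : ∀ K L, G L K = -G K L) (q : T → ℝ) :
    ∑ K, q K * ∑ L, G K L = 1 / 2 * ∑ K, ∑ L, G K L * (q K - q L) := by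
  have h : ∑ K, ∑ L, G K L * q L = -∑ K, ∑ L, G K L * q K := by
    rw [sum_comm, ← sum_neg_distrib]
    refine sum_congr rfl fun L _ => ?_
    rw [← sum_neg_distrib]
    refine sum_congr rfl fun K _ => ?_
    rw [hG]
    ring
  calc ∑ K, q K * ∑ L, G K L = ∑ K, ∑ L, G K L * q K := by simp only [mul_comm (q _), sum_mul]
    _ = 1 / 2 * (∑ K, ∑ L, G K L * q K - ∑ K, ∑ L, G K L * q L) := by rw [h]; ring
    _ = 1 / 2 * ∑ K, ∑ L, G K L * (q K - q L) := by simp only [mul_sub, sum_sub_distrib]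

lemma sum_mul_sum_mul_sub_eq_neg_mul_dissipation {T ι : Type*} [Fintype T] [Fintype ι]
    {m : T → ℝ} {τ : ℝ} {u v : ι → T → ℝ} {F : ι → T → T → ℝ} (hF : ∀ i K L, F i L K = -F i K L)
    (hcons : ∀ i K, m K * (u i K - v i K) + τ * ∑ L, F i K L = 0) (μ : ι → T → ℝ) :
    ∑ K, m K * ∑ i, μ i K * (u i K - v i K) =
      -(τ * (1 / 2 * ∑ i, ∑ K, ∑ L, F i K L * (μ i K - μ i L))) :=
  calc ∑ K, m K * ∑ i, μ i K * (u i K - v i K)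
      = ∑ i, ∑ K, μ i K * (m K * (u i K - v i K)) := by
        simp only [mul_sum]
        rw [sum_comm]
        exact sum_congr rfl fun i _ => sum_congr rfl fun K _ => by ring
    _ = ∑ i, -τ * ∑ K, μ i K * ∑ L, F i K L := by
        refine sum_congr rfl fun i _ => ?_
        rw [mul_sum]
        exact sum_congr rfl fun K _ => by linear_combination μ i K * hcons i K
    _ = -(τ * (1 / 2 * ∑ i, ∑ K, ∑ L, F i K L * (μ i K - μ i L))) := by
        rw [mul_sum, mul_sum, ← sum_neg_distrib]
        refine sum_congr rfl fun i _ => ?_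
        rw [sum_mul_sum_of_antisymm (hF i)]
        ring

section Electrostatics

variable {T : Type*} [Fintype T]

noncomputable def electricEnergy (a : T → T → ℝ) (b g : T → ℝ) (lam : ℝ) (φ : T → ℝ) : ℝ :=
  lam ^ 2 / 4 * ∑ K, ∑ L, a K L * (φ K - φ L) ^ 2 + lam ^ 2 / 2 * ∑ K, b K * (φ K - g K) ^ 2 -
    lam ^ 2 * ∑ K, b K * g K * (g K - φ K)

noncomputable def poissonOperator (a : T → T → ℝ) (b g : T → ℝ) (lam : ℝ) (φ : T → ℝ) (K : T) : ℝ :=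
  lam ^ 2 * ((∑ L, a K L * (φ K - φ L)) + b K * (φ K - g K))

lemma electricEnergy_sub_le {a : T → T → ℝ} {b : T → ℝ} (hsym : ∀ K L, a K L = a L K)
    (ha : ∀ K L, 0 ≤ a K L) (hb : ∀ K, 0 ≤ b K) (g : T → ℝ) (lam : ℝ) (φ ψ : T → ℝ) :
    electricEnergy a b g lam φ - electricEnergy a b g lam ψ ≤
      ∑ K, φ K * (poissonOperator a b g lam φ K - poissonOperator a b g lam ψ K) := by
  have hanti : ∀ K L, a L K * ((φ L - ψ L) - (φ K - ψ K)) =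
      -(a K L * ((φ K - ψ K) - (φ L - ψ L))) := fun K L => by rw [hsym]; ring
  calc electricEnergy a b g lam φ - electricEnergy a b g lam ψ
      = lam ^ 2 * (1 / 2 * ∑ K, ∑ L, a K L * ((φ K - φ L) ^ 2 - (ψ K - ψ L) ^ 2) / 2 +
          ∑ K, b K * (φ K ^ 2 - ψ K ^ 2) / 2) := by
        have hedges : ∑ K, ∑ L, a K L * ((φ K - φ L) ^ 2 - (ψ K - ψ L) ^ 2) / 2 =
            (∑ K, ∑ L, a K L * (φ K - φ L) ^ 2 - ∑ K, ∑ L, a K L * (ψ K - ψ L) ^ 2) / 2 := by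
          simp only [mul_sub, sub_div, sum_sub_distrib, ← sum_div]
        have hcells : ∑ K, b K * (φ K ^ 2 - ψ K ^ 2) / 2 =
            (∑ K, b K * (φ K - g K) ^ 2 - ∑ K, b K * (ψ K - g K) ^ 2) / 2 -
              (∑ K, b K * g K * (g K - φ K) - ∑ K, b K * g K * (g K - ψ K)) := by
          rw [← sum_sub_distrib, ← sum_sub_distrib, sum_div, ← sum_sub_distrib]
          exact sum_congr rfl fun K _ => by ring
        rw [electricEnergy, electricEnergy, hedges, hcells]
        ring
    _ ≤ lam ^ 2 * (1 / 2 * ∑ K, ∑ L, a K L * ((φ K - ψ K) - (φ L - ψ L)) * (φ K - φ L) +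
          ∑ K, b K * (φ K - ψ K) * φ K) := by
        gcongr with K _ L _ K _
        · nlinarith [mul_nonneg (ha K L) (sq_nonneg ((φ K - ψ K) - (φ L - ψ L)))]
        · nlinarith [mul_nonneg (hb K) (sq_nonneg (φ K - ψ K))]
    _ = ∑ K, φ K * (poissonOperator a b g lam φ K - poissonOperator a b g lam ψ K) := by
        rw [← sum_mul_sum_of_antisymm hanti φ, mul_add, mul_sum, mul_sum, ← sum_add_distrib]
        refine sum_congr rfl fun K _ => ?_
        have hlin : ∑ L, a K L * ((φ K - ψ K) - (φ L - ψ L)) =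
            ∑ L, a K L * (φ K - φ L) - ∑ L, a K L * (ψ K - ψ L) := by
          rw [← sum_sub_distrib]
          exact sum_congr rfl fun L _ => by ring
        rw [poissonOperator, poissonOperator, hlin]
        ring

lemma electricEnergy_sub_le_of_poisson {ι : Type*} [Fintype ι] {a : T → T → ℝ} {b g : T → ℝ}
    {lam : ℝ} (hsym : ∀ K L, a K L = a L K) (ha : ∀ K L, 0 ≤ a K L) (hb : ∀ K, 0 ≤ b K)
    {m f : T → ℝ} {z : ι → ℝ} {u v : ι → T → ℝ} {φ ψ : T → ℝ}
    (hφ : ∀ K, poissonOperator a b g lam φ K = m K * (f K + ∑ i, z i * u i K))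
    (hψ : ∀ K, poissonOperator a b g lam ψ K = m K * (f K + ∑ i, z i * v i K)) :
    electricEnergy a b g lam φ - electricEnergy a b g lam ψ ≤
      ∑ K, m K * ∑ i, z i * φ K * (u i K - v i K) := by
  refine (electricEnergy_sub_le hsym ha hb g lam φ ψ).trans_eq (sum_congr rfl fun K _ => ?_)
  have hcharge : ∑ i, z i * φ K * (u i K - v i K) =
      φ K * (∑ i, z i * u i K - ∑ i, z i * v i K) := by
    rw [mul_sub, mul_sum, mul_sum, ← sum_sub_distrib]
    exact sum_congr rfl fun i _ => by ring
  rw [hφ, hψ, hcharge]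
  ring

end Electrostatics

theorem discrete_free_energy_decay_general
    (T : Type*) [Fintype T]
    (m : T → ℝ) (hm : ∀ K, 0 < m K)
    (a : T → T → ℝ) (hsym : ∀ K L, a K L = a L K)
    (hnn : ∀ K L, 0 ≤ a K L)
    (I : ℕ) (D z : Fin I → ℝ) (hD : ∀ i, 0 < D i)
    (τ : ℝ)
    (lam : ℝ)
    (b : T → ℝ) (hb : ∀ K, 0 ≤ b K) (g : T → ℝ) (f : T → ℝ)
    -- the discrete free energy functional
    (En : (Fin I → T → ℝ) → (T → ℝ) → ℝ)
    (hEn : ∀ u φ, En u φ =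
      (∑ K, m K * mixEntropy I (fun i => u i K)) +
      lam ^ 2 / 4 * ∑ K, ∑ L, a K L * (φ K - φ L) ^ 2 +
      lam ^ 2 / 2 * ∑ K, b K * (φ K - g K) ^ 2 -
      lam ^ 2 * ∑ K, b K * g K * (g K - φ K))
    -- data at the two time levels
    (up un : Fin I → T → ℝ) (φp φn : T → ℝ)
    -- both pairs satisfy the discrete Poisson equation
    (hPoisson_p : ∀ K, lam ^ 2 * ((∑ L, a K L * (φp K - φp L)) + b K * (φp K - g K)) =
      m K * (f K + ∑ i, z i * up i K))
    (hPoisson_n : ∀ K, lam ^ 2 * ((∑ L, a K L * (φn K - φn L)) + b K * (φn K - g K)) =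
      m K * (f K + ∑ i, z i * un i K))
    -- admissibility of the previous iterate, positivity of the new one
    (hup_nn : ∀ i K, 0 ≤ up i K) (hup_sum : ∀ K, ∑ i, up i K ≤ 1)
    (hun_pos : ∀ i K, 0 < un i K) (hun0_pos : ∀ K, 0 < 1 - ∑ i, un i K)
    -- discrete fluxes associated with (uⁿ, φⁿ) and the conservation law
    (F : Fin I → T → T → ℝ)
    (hF : ∀ i K L, F i K L = a K L * D i *
      (un i K * (1 - ∑ j, un j L) * Bern (z i * (φn L - φn K)) -
        un i L * (1 - ∑ j, un j K) * Bern (z i * (φn K - φn L))))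
    (hcons : ∀ i K, m K * (un i K - up i K) + τ * ∑ L, F i K L = 0)
    -- electrochemical potentials and dissipation
    (μ : Fin I → T → ℝ)
    (hμ : ∀ i K, μ i K = Real.log (un i K / (1 - ∑ j, un j K)) + z i * φn K)
    (Diss : ℝ)
    (hDiss : Diss = 1 / 2 * ∑ i, ∑ K, ∑ L, F i K L * (μ i K - μ i L)) :
    0 ≤ Diss ∧ En un φn + τ * Diss ≤ En up φp := by
  have hedge : ∀ i K L, 0 ≤ F i K L * (μ i K - μ i L) := fun i K L => by
    rw [hF, hμ, hμ, mul_assoc]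
    exact mul_nonneg (mul_nonneg (hnn K L) (hD i).le)
      (Bern_flux_mul_sub_nonneg (hun_pos i K) (hun0_pos K) (hun_pos i L) (hun0_pos L) _ _ _)
  have hDiss_nonneg : 0 ≤ Diss := by
    rw [hDiss]
    exact mul_nonneg one_half_pos.le
      (sum_nonneg fun i _ => sum_nonneg fun K _ => sum_nonneg fun L _ => hedge i K L)
  have hpotential : ∑ K, m K * ∑ i, Real.log (un i K / (1 - ∑ j, un j K)) * (un i K - up i K) +
      ∑ K, m K * ∑ i, z i * φn K * (un i K - up i K) =
        ∑ K, m K * ∑ i, μ i K * (un i K - up i K) := by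
    rw [← sum_add_distrib]
    refine sum_congr rfl fun K _ => ?_
    rw [← mul_add, ← sum_add_distrib]
    simp only [hμ, add_mul]
  have hanti : ∀ i K L, F i L K = -F i K L := fun i K L => by rw [hF, hF, hsym]; ring
  have hentropy := sum_mul_mixEntropy_sub_le (fun K => (hm K).le) hun_pos hun0_pos hup_nn hup_sum
  have helectric := electricEnergy_sub_le_of_poisson hsym hnn hb hPoisson_n hPoisson_p
  have hbalance := sum_mul_sum_mul_sub_eq_neg_mul_dissipation hanti hcons μ
  refine ⟨hDiss_nonneg, ?_⟩
  rw [electricEnergy, electricEnergy] at helectric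
  rw [hEn, hEn, hDiss]
  linarith

/-- Free energy dissipation of the scheme: the discrete dissipation `𝒟` is
nonnegative and the discrete free energy decays, `ℋ(uⁿ,φⁿ) + τ·𝒟 ≤ ℋ(uⁿ⁻¹,φⁿ⁻¹)`. -/
theorem discrete_free_energy_decay
    (T : Type*) [Fintype T] [Nonempty T]
    (m : T → ℝ) (hm : ∀ K, 0 < m K)
    (a : T → T → ℝ) (hsym : ∀ K L, a K L = a L K)
    (hnn : ∀ K L, 0 ≤ a K L) (hdiag : ∀ K, a K K = 0)
    (I : ℕ) (hI : 1 ≤ I) (D z : Fin I → ℝ) (hD : ∀ i, 0 < D i)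
    (τ : ℝ) (hτ : 0 < τ)
    (lam : ℝ) (hlam : 0 < lam)
    (b : T → ℝ) (hb : ∀ K, 0 ≤ b K) (g : T → ℝ) (f : T → ℝ)
    -- the discrete free energy functional
    (En : (Fin I → T → ℝ) → (T → ℝ) → ℝ)
    (hEn : ∀ u φ, En u φ =
      (∑ K, m K * mixEntropy I (fun i => u i K)) +
      lam ^ 2 / 4 * ∑ K, ∑ L, a K L * (φ K - φ L) ^ 2 +
      lam ^ 2 / 2 * ∑ K, b K * (φ K - g K) ^ 2 -
      lam ^ 2 * ∑ K, b K * g K * (g K - φ K))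
    -- data at the two time levels
    (up un : Fin I → T → ℝ) (φp φn : T → ℝ)
    -- both pairs satisfy the discrete Poisson equation
    (hPoisson_p : ∀ K, lam ^ 2 * ((∑ L, a K L * (φp K - φp L)) + b K * (φp K - g K)) =
      m K * (f K + ∑ i, z i * up i K))
    (hPoisson_n : ∀ K, lam ^ 2 * ((∑ L, a K L * (φn K - φn L)) + b K * (φn K - g K)) =
      m K * (f K + ∑ i, z i * un i K))
    -- admissibility of the previous iterate, positivity of the new one
    (hup_nn : ∀ i K, 0 ≤ up i K) (hup_sum : ∀ K, ∑ i, up i K ≤ 1)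
    (hun_pos : ∀ i K, 0 < un i K) (hun0_pos : ∀ K, 0 < 1 - ∑ i, un i K)
    -- discrete fluxes associated with (uⁿ, φⁿ) and the conservation law
    (F : Fin I → T → T → ℝ)
    (hF : ∀ i K L, F i K L = a K L * D i *
      (un i K * (1 - ∑ j, un j L) * Bern (z i * (φn L - φn K)) -
        un i L * (1 - ∑ j, un j K) * Bern (z i * (φn K - φn L))))
    (hcons : ∀ i K, m K * (un i K - up i K) + τ * ∑ L, F i K L = 0)
    -- electrochemical potentials and dissipation
    (μ : Fin I → T → ℝ)
    (hμ : ∀ i K, μ i K = Real.log (un i K / (1 - ∑ j, un j K)) + z i * φn K)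
    (Diss : ℝ)
    (hDiss : Diss = 1 / 2 * ∑ i, ∑ K, ∑ L, F i K L * (μ i K - μ i L)) :
    0 ≤ Diss ∧ En un φn + τ * Diss ≤ En up φp :=
  discrete_free_energy_decay_general T m hm a hsym hnn I D z hD τ lam b hb g f En hEn up un φp φn
    hPoisson_p hPoisson_n hup_nn hup_sum hun_pos hun0_pos F hF hcons μ hμ Diss hDiss
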